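/- In finite dimensions, the composition of two Lagrangians is always a Lagrangian: if W₀, W₁, W₂ are finite-dimensional complex inner product spaces with real structures, and L₀₁ ⊆ W₀ ⊕ (−W₁), L₁₂ ⊆ W₁ ⊕ (−W₂) are Lagrangians, then L₀₁ ∘ L₁₂ is a Lagrangian in W₀ ⊕ (−W₂). -/

import Mathlib

/-! Conjugating `L₀₁ ∘ L₁₂` lands in its orthogonal by a direct computation through the middle
factor. Conversely, let `y ⊥ L₀₁ ∘ L₁₂`. The functional `(x, z) ↦ ⟪y₀, x₀⟫ + ⟪y₂, z₂⟫` on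
`L₀₁ × L₁₂` vanishes on the kernel of `(x, z) ↦ x₁ - z₁ ∈ W₁`, hence by Riesz (this is where finite
dimension enters) it equals `⟪s, x₁ - z₁⟫` for some `s ∈ W₁`. This says `(y₀, -s) ⊥ L₀₁` and
`(s, y₂) ⊥ L₁₂`, i.e. `(ȳ₀, s̄) ∈ L₀₁` and `(s̄, -ȳ₂) ∈ L₁₂`, so `(ȳ₀, -ȳ₂) ∈ L₀₁ ∘ L₁₂`. -/

noncomputable section

/-- A real structure on a complex inner product space: an anti-unitary involution `v ↦ v̄`. -/
structure RealStructure (W : Type*) [NormedAddCommGroup W] [InnerProductSpace ℂ W] where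
  conj : W → W
  map_add : ∀ v w : W, conj (v + w) = conj v + conj w
  map_smul : ∀ (c : ℂ) (v : W), conj (c • v) = (starRingEnd ℂ) c • conj v
  invol : ∀ v : W, conj (conj v) = v
  inner_conj : ∀ v w : W, (inner ℂ (conj v) (conj w) : ℂ) = (starRingEnd ℂ) (inner ℂ v w : ℂ)

/-- The real structure of `A ⊕ (−B)`. -/
def pairConj {A B : Type*} [NormedAddCommGroup A] [InnerProductSpace ℂ A]
    [NormedAddCommGroup B] [InnerProductSpace ℂ B]
    (rA : RealStructure A) (rB : RealStructure B) : A × B → A × B :=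
  fun p => (rA.conj p.1, -rB.conj p.2)

/-- The Hermitian inner product of `A ⊕ B`. -/
def pairInner {A B : Type*} [NormedAddCommGroup A] [InnerProductSpace ℂ A]
    [NormedAddCommGroup B] [InnerProductSpace ℂ B] (x y : A × B) : ℂ :=
  (inner ℂ x.1 y.1 : ℂ) + (inner ℂ x.2 y.2 : ℂ)

/-- A Lagrangian `L ⊆ A ⊕ (−B)`. -/
def IsLagrangianPair {A B : Type*} [NormedAddCommGroup A] [InnerProductSpace ℂ A]
    [NormedAddCommGroup B] [InnerProductSpace ℂ B]
    (rA : RealStructure A) (rB : RealStructure B) (L : Submodule ℂ (A × B)) : Prop :=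
  pairConj rA rB '' (L : Set (A × B)) = {y : A × B | ∀ x ∈ L, pairInner x y = 0}

/-- The composition of two linear relations `L₀₁ ⊆ W₀ × W₁`, `L₁₂ ⊆ W₁ × W₂`. -/
def composeRel {W₀ W₁ W₂ : Type*} [NormedAddCommGroup W₀] [InnerProductSpace ℂ W₀]
    [NormedAddCommGroup W₁] [InnerProductSpace ℂ W₁]
    [NormedAddCommGroup W₂] [InnerProductSpace ℂ W₂]
    (L01 : Submodule ℂ (W₀ × W₁)) (L12 : Submodule ℂ (W₁ × W₂)) :
    Submodule ℂ (W₀ × W₂) where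
  carrier := {p | ∃ w₁ : W₁, (p.1, w₁) ∈ L01 ∧ (w₁, p.2) ∈ L12}
  add_mem' := by
    rintro a b ⟨w, hw1, hw2⟩ ⟨w', hw1', hw2'⟩
    exact ⟨w + w', L01.add_mem hw1 hw1', L12.add_mem hw2 hw2'⟩
  zero_mem' := ⟨0, L01.zero_mem, L12.zero_mem⟩
  smul_mem' := by
    rintro c a ⟨w, hw1, hw2⟩
    exact ⟨c • w, L01.smul_mem c hw1, L12.smul_mem c hw2⟩

theorem LinearMap.exists_comp_eq_of_ker_le {K V V' W : Type*} [DivisionRing K]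
    [AddCommGroup V] [Module K V] [AddCommGroup V'] [Module K V'] [AddCommGroup W] [Module K W]
    (π : V →ₗ[K] V') (g : V →ₗ[K] W) (h : LinearMap.ker π ≤ LinearMap.ker g) :
    ∃ f : V' →ₗ[K] W, f ∘ₗ π = g := by
  obtain ⟨f, hf⟩ := LinearMap.exists_extend
    ((LinearMap.ker π).liftQ g h ∘ₗ π.quotKerEquivRange.symm.toLinearMap)
  refine ⟨f, LinearMap.ext fun v => ?_⟩
  simpa using LinearMap.congr_fun hf ⟨π v, LinearMap.mem_range_self π v⟩

theorem exists_inner_eq_of_ker_le {𝕜 M F : Type*} [RCLike 𝕜] [AddCommGroup M] [Module 𝕜 M]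
    [NormedAddCommGroup F] [InnerProductSpace 𝕜 F] [FiniteDimensional 𝕜 F]
    (π : M →ₗ[𝕜] F) (g : M →ₗ[𝕜] 𝕜) (h : LinearMap.ker π ≤ LinearMap.ker g) :
    ∃ s : F, ∀ m, inner 𝕜 s (π m) = g m := by
  have := FiniteDimensional.complete 𝕜 F
  obtain ⟨f, rfl⟩ := π.exists_comp_eq_of_ker_le g h
  exact ⟨(InnerProductSpace.toDual 𝕜 F).symm (LinearMap.toContinuousLinearMap f), fun m => by simp⟩

section Lagrangian

variable {A B : Type*} [NormedAddCommGroup A] [InnerProductSpace ℂ A]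
  [NormedAddCommGroup B] [InnerProductSpace ℂ B]

theorem RealStructure.conj_neg (r : RealStructure A) (v : A) : r.conj (-v) = -r.conj v := by
  simpa using r.map_smul (-1) v

theorem pairConj_involutive (rA : RealStructure A) (rB : RealStructure B) :
    Function.Involutive (pairConj rA rB) := fun p => by
  simp [pairConj, rA.invol, rB.conj_neg, rB.invol]

theorem IsLagrangianPair.mem_iff {rA : RealStructure A} {rB : RealStructure B}
    {L : Submodule ℂ (A × B)} (hL : IsLagrangianPair rA rB L) {p : A × B} :
    p ∈ L ↔ ∀ x ∈ L, pairInner x (pairConj rA rB p) = 0 := by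
  rw [← SetLike.mem_coe, ← (pairConj_involutive rA rB).injective.mem_set_image, hL]
  rfl

end Lagrangian

section Composition

variable {W₀ W₁ W₂ : Type*} [NormedAddCommGroup W₀] [InnerProductSpace ℂ W₀]
  [NormedAddCommGroup W₁] [InnerProductSpace ℂ W₁] [NormedAddCommGroup W₂] [InnerProductSpace ℂ W₂]

theorem pairInner_pairConj_eq_add (r₀ : RealStructure W₀) (r₁ : RealStructure W₁)
    (r₂ : RealStructure W₂) (a a' : W₀) (v w : W₁) (c c' : W₂) :
    pairInner (a, c) (pairConj r₀ r₂ (a', c')) =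
      pairInner (a, v) (pairConj r₀ r₁ (a', w)) + pairInner (v, c) (pairConj r₁ r₂ (w, c')) := by
  simp only [pairInner, pairConj, inner_neg_right]
  ring

theorem exists_middle_of_orthogonal_composeRel [FiniteDimensional ℂ W₁]
    {L01 : Submodule ℂ (W₀ × W₁)} {L12 : Submodule ℂ (W₁ × W₂)} {y : W₀ × W₂}
    (hy : ∀ x ∈ composeRel L01 L12, pairInner x y = 0) :
    ∃ s : W₁, (∀ x ∈ L01, pairInner x (y.1, -s) = 0) ∧ (∀ x ∈ L12, pairInner x (s, y.2) = 0) := by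
  let π : L01 × L12 →ₗ[ℂ] W₁ :=
    (LinearMap.snd ℂ W₀ W₁ ∘ₗ L01.subtype).coprod (-(LinearMap.fst ℂ W₁ W₂ ∘ₗ L12.subtype))
  let g : L01 × L12 →ₗ[ℂ] ℂ :=
    (innerₛₗ ℂ y.1 ∘ₗ LinearMap.fst ℂ W₀ W₁ ∘ₗ L01.subtype).coprod
      (innerₛₗ ℂ y.2 ∘ₗ LinearMap.snd ℂ W₁ W₂ ∘ₗ L12.subtype)
  have hker : LinearMap.ker π ≤ LinearMap.ker g := by
    rintro ⟨⟨x, hx⟩, ⟨z, hz⟩⟩ hxz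
    have hmid : x.2 = z.1 := by simpa [π, ← sub_eq_add_neg, sub_eq_zero] using hxz
    have := hy (x.1, z.2) ⟨x.2, hx, hmid ▸ hz⟩
    simpa [g, pairInner] using congrArg (starRingEnd ℂ) this
  obtain ⟨s, hs⟩ := exists_inner_eq_of_ker_le π g hker
  have hs01 (x) (hx : x ∈ L01) : inner ℂ s x.2 = inner ℂ y.1 x.1 := by
    simpa [π, g] using hs (⟨x, hx⟩, 0)
  have hs12 (z) (hz : z ∈ L12) : -inner ℂ s z.1 = inner ℂ y.2 z.2 := by
    simpa [π, g] using hs (0, ⟨z, hz⟩)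
  refine ⟨s, fun x hx => ?_, fun z hz => ?_⟩
  · dsimp only [pairInner]
    rw [inner_neg_right, ← inner_conj_symm x.2, hs01 x hx, inner_conj_symm, add_neg_cancel]
  · dsimp only [pairInner]
    rw [← inner_conj_symm z.1, ← inner_conj_symm z.2, ← map_add, ← hs12 z hz, add_neg_cancel,
      map_zero]

end Composition

variable {W₀ W₁ W₂ : Type*}
  [NormedAddCommGroup W₀] [InnerProductSpace ℂ W₀] [FiniteDimensional ℂ W₀]
  [NormedAddCommGroup W₁] [InnerProductSpace ℂ W₁] [FiniteDimensional ℂ W₁]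
  [NormedAddCommGroup W₂] [InnerProductSpace ℂ W₂] [FiniteDimensional ℂ W₂]

/-- In finite dimensions, the composition of two Lagrangians is always a Lagrangian. -/
theorem composition_lagrangian_finite_dimensional
    (r₀ : RealStructure W₀) (r₁ : RealStructure W₁) (r₂ : RealStructure W₂)
    (L01 : Submodule ℂ (W₀ × W₁)) (L12 : Submodule ℂ (W₁ × W₂))
    (h01 : IsLagrangianPair r₀ r₁ L01) (h12 : IsLagrangianPair r₁ r₂ L12) :
    IsLagrangianPair r₀ r₂ (composeRel L01 L12) := by
  refine Set.Subset.antisymm ?_ fun y hy => ?_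
  · rintro _ ⟨p, ⟨w, hp01, hp12⟩, rfl⟩ x ⟨v, hx01, hx12⟩
    rw [pairInner_pairConj_eq_add r₀ r₁ r₂ x.1 p.1 v w x.2 p.2,
      (h01.mem_iff.1 hp01) _ hx01, (h12.mem_iff.1 hp12) _ hx12, add_zero]
  · obtain ⟨s, hs01, hs12⟩ := exists_middle_of_orthogonal_composeRel hy
    have hw01 : (r₀.conj y.1, r₁.conj s) ∈ L01 :=
      h01.mem_iff.2 (by simpa [pairConj, r₀.invol, r₁.invol] using hs01)
    have hw12 : (r₁.conj s, -r₂.conj y.2) ∈ L12 :=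
      h12.mem_iff.2 (by simpa [pairConj, r₁.invol, r₂.conj_neg, r₂.invol] using hs12)
    exact ⟨(r₀.conj y.1, -r₂.conj y.2), ⟨r₁.conj s, hw01, hw12⟩, pairConj_involutive r₀ r₂ y⟩
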